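/- arXiv:2206.11113 — 10 statements merged into one kernel-verified Lean document; each statement's English description precedes it below -/
import Mathlib

section
/- Let n ≥ 1, ℓ ≥ 1, and let S be a nonempty finite collection of subsets of a set V of size n, each subset having size at least ℓ. If n_i denotes the number of sets of S not hit after i greedy iterations (where each iteration adds an element contained in the maximum number of unhit sets), then n_i ≤ |S|·(1 - ℓ/n)^i for all i ≥ 0. -/
/-- In the greedy hitting-set process (starting from `R 0 = ∅`,
each step adding an element contained in the maximum number of not-yet-hit sets),
the number `n_i` of sets of `S` not hit after `i` iterations satisfies
`n_i ≤ |S|·(1 - ℓ/n)^i`. -/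
theorem stmt_1 (n ℓ : ℕ) (hn : 1 ≤ n) (hℓ : 1 ≤ ℓ)
    (S : Finset (Finset (Fin n))) (hSne : S.Nonempty)
    (hcard : ∀ A ∈ S, ℓ ≤ A.card)
    (R : ℕ → Finset (Fin n)) (hR0 : R 0 = ∅)
    (hstep : ∀ i : ℕ, ∃ j : Fin n,
      R (i + 1) = insert j (R i) ∧
      ∀ j' : Fin n,
        (S.filter fun A => j' ∈ A ∧ A ∩ R i = ∅).card ≤
          (S.filter fun A => j ∈ A ∧ A ∩ R i = ∅).card) :
    ∀ i : ℕ,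
      (((S.filter fun A => A ∩ R i = ∅).card : ℝ)) ≤
        (S.card : ℝ) * (1 - (ℓ : ℝ) / (n : ℝ)) ^ i := by
  have hn0 : (0:ℝ) < n := by exact_mod_cast hn
  have hℓn : (ℓ:ℝ) ≤ n := by
    obtain ⟨A, hA⟩ := hSne
    have h1 : ℓ ≤ A.card := hcard A hA
    have h2 : A.card ≤ n := by
      simpa using Finset.card_le_card (Finset.subset_univ A)
    exact_mod_cast h1.trans h2
  have hfac : (0:ℝ) ≤ 1 - (ℓ:ℝ)/n := by
    have : (ℓ:ℝ)/n ≤ 1 := (div_le_one hn0).mpr hℓn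
    linarith
  intro i
  induction i with
  | zero =>
      simpa using (by exact_mod_cast Finset.card_filter_le S (fun A => A ∩ R 0 = ∅) :
        ((S.filter fun A => A ∩ R 0 = ∅).card : ℝ) ≤ S.card)
  | succ i ih =>
      obtain ⟨j, hRj, hmax⟩ := hstep i
      set c : Fin n → ℕ := fun j' => (S.filter fun A => j' ∈ A ∧ A ∩ R i = ∅).card with hc
      set m : ℕ := (S.filter fun A => A ∩ R i = ∅).card with hm
      have hsum : ∑ j' : Fin n, c j' = ∑ A ∈ S.filter (fun A => A ∩ R i = ∅), A.card := by
        simp only [hc, Finset.card_filter]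
        rw [Finset.sum_comm, Finset.sum_filter]
        refine Finset.sum_congr rfl fun A hA => ?_
        by_cases h : A ∩ R i = ∅ <;> simp [h, Finset.sum_ite_mem]
      have h1 : ℓ * m ≤ ∑ j' : Fin n, c j' := by
        rw [hsum]
        calc ℓ * m = ∑ A ∈ S.filter (fun A => A ∩ R i = ∅), ℓ := by
              simp [hm, mul_comm, Finset.sum_const, Nat.smul_one_eq_cast]
          _ ≤ _ := Finset.sum_le_sum fun A hA =>
              hcard A (Finset.mem_filter.mp hA).1
      have h2 : ∑ j' : Fin n, c j' ≤ n * c j := by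
        calc ∑ j' : Fin n, c j' ≤ ∑ _j' : Fin n, c j :=
              Finset.sum_le_sum fun j' _ => hmax j'
          _ = n * c j := by simp [mul_comm]
      have hkey : ℓ * m ≤ n * c j := h1.trans h2
      have hsplit : (S.filter fun A => A ∩ R (i+1) = ∅).card + c j = m := by
        have hiff : ∀ A : Finset (Fin n), (A ∩ R (i+1) = ∅) ↔ ((A ∩ R i = ∅) ∧ j ∉ A) := by
          intro A
          rw [hRj]
          simp only [Finset.eq_empty_iff_forall_notMem, Finset.mem_inter, Finset.mem_insert]
          constructor
          · intro h
            refine ⟨fun x hx => h x ⟨hx.1, Or.inr hx.2⟩, fun hj => h j ⟨hj, Or.inl rfl⟩⟩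
          · rintro ⟨h1, h2⟩ x ⟨hxA, hx⟩
            rcases hx with rfl | hx
            · exact h2 hxA
            · exact h1 x ⟨hxA, hx⟩
        have e1 : (S.filter fun A => A ∩ R (i+1) = ∅) =
            (S.filter (fun A => A ∩ R i = ∅)).filter (fun A => j ∉ A) := by
          rw [Finset.filter_filter]
          exact Finset.filter_congr fun A _ => by rw [hiff A]
        have e2 : (S.filter fun A => j ∈ A ∧ A ∩ R i = ∅) =
            (S.filter (fun A => A ∩ R i = ∅)).filter (fun A => j ∈ A) := by
          rw [Finset.filter_filter]
          exact Finset.filter_congr fun A _ => by tauto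
        rw [e1, hc]
        simp only [e2]
        rw [add_comm]
        exact Finset.card_filter_add_card_filter_not (fun A => j ∈ A)
      -- real arithmetic
      have hcjR : ((ℓ:ℝ) * m) / n ≤ (c j : ℝ) := by
        rw [div_le_iff₀ hn0]
        have : (ℓ:ℝ) * m ≤ n * c j := by exact_mod_cast hkey
        linarith
      have hsplitR : ((S.filter fun A => A ∩ R (i+1) = ∅).card : ℝ) = (m : ℝ) - c j := by
        have : ((S.filter fun A => A ∩ R (i+1) = ∅).card : ℝ) + c j = m := by
          exact_mod_cast hsplit
        linarith
      have hstep1 : ((S.filter fun A => A ∩ R (i+1) = ∅).card : ℝ) ≤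
          (m : ℝ) * (1 - (ℓ:ℝ)/n) := by
        rw [hsplitR]
        have : (m:ℝ) * (1 - (ℓ:ℝ)/n) = m - (ℓ:ℝ)*m/n := by ring
        rw [this]
        linarith
      calc ((S.filter fun A => A ∩ R (i+1) = ∅).card : ℝ)
          ≤ (m : ℝ) * (1 - (ℓ:ℝ)/n) := hstep1
        _ ≤ ((S.card : ℝ) * (1 - (ℓ:ℝ)/n) ^ i) * (1 - (ℓ:ℝ)/n) :=
            mul_le_mul_of_nonneg_right ih hfac
        _ = (S.card : ℝ) * (1 - (ℓ:ℝ)/n) ^ (i+1) := by ring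
end

section
/- Let G be the temporal clique on V = A ⊎ B with |A| = |B| = n/2, where edges inside A have label 3, edges inside B have label 1, and edges between A and B have label 2. Then any temporal 2-spanner of G contains all n²/4 edges between A and B; hence any temporal 2-spanner of G has size Ω(n²). -/
/-- A temporal walk of length `k` from `u` to `v`: consecutive vertices are joined
by edges of the adjacency relation `adj` and the traversed labels are
non-decreasing. -/
def IsTempWalk {V : Type*} (adj : V → V → Prop) (lab : V → V → ℕ)
    (u v : V) (k : ℕ) (p : ℕ → V) : Prop :=
  p 0 = u ∧ p k = v ∧ (∀ i, i < k → adj (p i) (p (i + 1))) ∧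
    (∀ i, i + 1 < k → lab (p i) (p (i + 1)) ≤ lab (p (i + 1)) (p (i + 2)))

/-- The temporal distance from `u` to `v` (minimum number of edges of a temporal
path, `⊤` if none exists). -/
noncomputable def tdist {V : Type*} (adj : V → V → Prop) (lab : V → V → ℕ)
    (u v : V) : ℕ∞ :=
  sInf {m : ℕ∞ | ∃ k : ℕ, m = (k : ℕ∞) ∧ ∃ p : ℕ → V, IsTempWalk adj lab u v k p}

/-- For the temporal clique on `V = A ⊎ B` with `|A| = |B| = n/2`,
labels `3` inside `A`, `1` inside `B` and `2` across, any temporal `2`-spanner `H`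
contains all edges between `A` and `B`; hence it has at least `(n/2)·(n/2) = n²/4`
edges. -/
theorem stmt_4 {V : Type*} [Fintype V] [DecidableEq V] (n : ℕ)
    (hV : Fintype.card V = n)
    (A : Finset V) (hA : A.card = n / 2) (hAc : Aᶜ.card = n / 2)
    (lab : V → V → ℕ)
    (hlab3 : ∀ u v : V, u ≠ v → u ∈ A → v ∈ A → lab u v = 3)
    (hlab1 : ∀ u v : V, u ≠ v → u ∉ A → v ∉ A → lab u v = 1)
    (hlab2 : ∀ u v : V, u ≠ v → u ∈ A → v ∉ A → lab u v = 2)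
    (hlabsym : ∀ u v : V, lab u v = lab v u)
    (H : V → V → Prop) [DecidableRel H]
    (hHsym : ∀ u v, H u v → H v u)
    (hHsub : ∀ u v, H u v → u ≠ v)
    (hspanner : ∀ u v : V,
      tdist H lab u v ≤ 2 * tdist (fun a b : V => a ≠ b) lab u v) :
    (∀ u ∈ A, ∀ v ∈ Aᶜ, H u v) ∧
    (n / 2) * (n / 2) ≤ ((A ×ˢ Aᶜ).filter fun e => H e.1 e.2).card := by
  have key : ∀ u ∈ A, ∀ v ∈ Aᶜ, H u v := by
    intro u hu v hv
    rw [Finset.mem_compl] at hv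
    have huv : u ≠ v := fun h => hv (h ▸ hu)
    -- tdist in G is ≤ 1 via the direct edge
    have hG : tdist (fun a b : V => a ≠ b) lab u v ≤ 1 := by
      apply sInf_le
      refine ⟨1, by norm_num, fun i => if i = 0 then u else v, ?_⟩
      refine ⟨by simp, by simp, ?_, ?_⟩
      · intro i hi
        interval_cases i
        simpa using huv
      · intro i hi; omega
    have hH : tdist H lab u v ≤ 2 := by
      calc tdist H lab u v ≤ 2 * tdist (fun a b : V => a ≠ b) lab u v := hspanner u v
        _ ≤ 2 * 1 := by exact mul_le_mul_right hG 2
        _ = 2 := by norm_num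
    -- extract a short walk
    have hex : ∃ m ∈ {m : ℕ∞ | ∃ k : ℕ, m = (k : ℕ∞) ∧
        ∃ p : ℕ → V, IsTempWalk H lab u v k p}, m ≤ 2 := by
      by_contra hc
      push_neg at hc
      have h3 : (3 : ℕ∞) ≤ tdist H lab u v := by
        apply le_sInf
        intro m hm
        have := hc m hm
        exact Order.add_one_le_of_lt this
      have : (3 : ℕ∞) ≤ 2 := h3.trans hH
      norm_num at this
    obtain ⟨m, ⟨k, rfl, p, hp⟩, hm⟩ := hex
    have hk : k ≤ 2 := by exact_mod_cast hm
    obtain ⟨h0, hke, hadj, hlab⟩ := hp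
    interval_cases k
    · exact absurd (h0.symm.trans hke) huv
    · have := hadj 0 (by norm_num)
      rwa [h0, hke] at this
    · -- length-2 walk: impossible unless it uses the direct edge... derive contradiction
      set w := p 1 with hw
      have e1 : H u w := by have := hadj 0 (by norm_num); rwa [h0] at this
      have e2 : H w v := by have := hadj 1 (by norm_num); rwa [hke] at this
      have hl : lab u w ≤ lab w v := by
        have := hlab 0 (by norm_num); rwa [h0, hke] at this
      have hwu : u ≠ w := hHsub u w e1
      have hwv : w ≠ v := hHsub w v e2
      by_cases hwA : w ∈ A
      · rw [hlab3 u w hwu hu hwA, hlab2 w v hwv hwA hv] at hl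
        norm_num at hl
      · rw [hlab2 u w hwu hu hwA, hlab1 w v hwv hwA hv] at hl
        norm_num at hl
  refine ⟨key, ?_⟩
  have : (A ×ˢ Aᶜ).filter (fun e => H e.1 e.2) = A ×ˢ Aᶜ := by
    apply Finset.filter_true_of_mem
    intro e he
    rw [Finset.mem_product] at he
    exact key e.1 he.1 e.2 he.2
  rw [this, Finset.card_product, hA, hAc]
end

section
/- For every τ ∈ {1,...,L}, the set Π_v produced by the greedy path-selection procedure contains a τ-restricted temporal path π from s to v with |π| ≤ (1+δ)·d_G^{(τ)}(s,v), provided d_G^{(τ)}(s,v) is finite. -/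
open scoped ENNReal

/-! The threshold `t` is always either `⊤` or the value `d τ'` of the last selected step
`τ'`. So if step `τ` is not selected, then `c · d τ ≥ t (τ - 1)`; as `c · d τ` is
finite, `t (τ - 1)` is not `⊤`, hence it is `d τ'` for a selected `τ' < τ`, and
`d τ' ≤ c · d τ`. -/

namespace GreedySelection

variable {c : ℝ≥0∞} {d t : ℕ → ℝ≥0∞}

theorem threshold_eq_top_or_eq_selected (ht0 : t 0 = ⊤)
    (htstep : ∀ τ, t (τ + 1) = if c * d (τ + 1) < t τ then d (τ + 1) else t τ) (n : ℕ) :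
    t n = ⊤ ∨ ∃ τ', 1 ≤ τ' ∧ τ' ≤ n ∧ c * d τ' < t (τ' - 1) ∧ t n = d τ' := by
  induction n with
  | zero => exact Or.inl ht0
  | succ m ih =>
    rw [htstep m]
    by_cases hsel : c * d (m + 1) < t m
    · exact Or.inr ⟨m + 1, le_add_self, le_rfl, hsel, if_pos hsel⟩
    · rw [if_neg hsel]
      rcases ih with htop | ⟨τ', h1, hle, hsel', heq⟩
      · exact Or.inl htop
      · exact Or.inr ⟨τ', h1, hle.trans m.le_succ, hsel', heq⟩

theorem exists_selected_le_mul (hc1 : 1 ≤ c) (hctop : c ≠ ⊤) (ht0 : t 0 = ⊤)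
    (htstep : ∀ τ, t (τ + 1) = if c * d (τ + 1) < t τ then d (τ + 1) else t τ)
    {τ : ℕ} (hτ : 1 ≤ τ) (hdτ : d τ ≠ ⊤) :
    ∃ τ', 1 ≤ τ' ∧ τ' ≤ τ ∧ c * d τ' < t (τ' - 1) ∧ d τ' ≤ c * d τ := by
  by_cases hsel : c * d τ < t (τ - 1)
  · exact ⟨τ, hτ, le_rfl, hsel, le_mul_of_one_le_left zero_le hc1⟩
  · rw [not_lt] at hsel
    rcases threshold_eq_top_or_eq_selected ht0 htstep (τ - 1) with
      htop | ⟨τ', h1, hle, hsel', heq⟩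
    · rw [htop, top_le_iff] at hsel
      exact absurd hsel (ENNReal.mul_ne_top hctop hdτ)
    · exact ⟨τ', h1, hle.trans (τ.sub_le 1), hsel', heq ▸ hsel⟩

end GreedySelection

theorem stmt_6_general (L : ℕ) (δ : NNReal)
    (d : ℕ → ℝ≥0∞)
    (t : ℕ → ℝ≥0∞) (ht0 : t 0 = ⊤)
    (htstep : ∀ τ : ℕ,
      t (τ + 1) =
        if (1 + (δ : ℝ≥0∞)) * d (τ + 1) < t τ then d (τ + 1) else t τ) :
    ∀ τ : ℕ, 1 ≤ τ → τ ≤ L → d τ ≠ ⊤ →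
      ∃ τ' : ℕ, 1 ≤ τ' ∧ τ' ≤ τ ∧
        (1 + (δ : ℝ≥0∞)) * d τ' < t (τ' - 1) ∧
        d τ' ≤ (1 + (δ : ℝ≥0∞)) * d τ :=
  fun _ hτ _ hdτ =>
    GreedySelection.exists_selected_le_mul le_self_add (by simp) ht0 htstep hτ hdτ

/-- Correctness of the greedy path-selection procedure
(Algorithm 2): `d τ` denotes the length of a shortest `τ`-restricted temporal path
from `s` to `v` (`⊤` if none exists); the procedure scans `τ = 1,…,L`, keeping a
threshold `t` (initially `⊤`) and selecting `τ` whenever `(1+δ)·d τ < t`, in which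
case `t` is updated to `d τ`.  Then for every `τ ∈ {1,…,L}` with `d τ` finite there
is a selected `τ' ≤ τ` (whose shortest `τ'`-restricted path is in particular
`τ`-restricted) with `d τ' ≤ (1+δ)·d τ`. -/
theorem stmt_6 (L : ℕ) (δ : NNReal) (hδ : 0 < δ)
    (d : ℕ → ℝ≥0∞)
    (hmono : ∀ τ τ' : ℕ, τ ≤ τ' → d τ' ≤ d τ)
    (t : ℕ → ℝ≥0∞) (ht0 : t 0 = ⊤)
    (htstep : ∀ τ : ℕ,
      t (τ + 1) =
        if (1 + (δ : ℝ≥0∞)) * d (τ + 1) < t τ then d (τ + 1) else t τ) :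
    ∀ τ : ℕ, 1 ≤ τ → τ ≤ L → d τ ≠ ⊤ →
      ∃ τ' : ℕ, 1 ≤ τ' ∧ τ' ≤ τ ∧
        (1 + (δ : ℝ≥0∞)) * d τ' < t (τ' - 1) ∧
        d τ' ≤ (1 + (δ : ℝ≥0∞)) * d τ :=
  stmt_6_general L δ d t ht0 htstep
end

section
/- In the lower-bound construction with offset μ (where μ = β+7 if β is even and μ = β+8 if β is odd, so μ is odd), for the path π_i built over π_{i-1}: vertex number j of π_{i-1} with j ≥ μ is at distance 1 + j - μ from s in π_i for all odd j < |π_{i-1}| - 1, and at distance 5 + j - μ from s in π_i for all even j ≤ |π_{i-1}| - 4. -/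
/-- In the lower-bound construction with offset `μ` (`μ = β+7` for
even `β`, `μ = β+8` for odd `β`), the path `π_i` over `π_{i-1}` is described by the
sequence `a` of `π_{i-1}`-vertex-numbers: `a 1 = μ`, then alternately a backward
hop (odd `j ↦ j-3`) and a forward hop (even `j ↦ j+5`).  Here `N` is the number of
vertices of `π_{i-1}`.  Every vertex number `j ≥ μ` of `π_{i-1}` is at distance
`1 + j - μ` from `s` in `π_i` when `j` is odd (and `j < N-1`), and at distance
`5 + j - μ` when `j` is even (and `j ≤ N-4`). -/
theorem stmt_8 (β μ N : ℕ)
    (hμ : μ = if Even β then β + 7 else β + 8)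
    (a : ℕ → ℕ)
    (ha1 : a 1 = μ)
    (hstep : ∀ k, 1 ≤ k → a (k + 1) = if Odd (a k) then a k - 3 else a k + 5) :
    ∀ j, μ ≤ j →
      (Odd j → j + 1 < N → a (1 + j - μ) = j) ∧
      (Even j → j + 4 ≤ N → a (5 + j - μ) = j) := by
  have hμodd : Odd μ := by
    rcases Nat.even_or_odd β with h | h
    · rw [hμ, if_pos h]; obtain ⟨m, hm⟩ := h; exact ⟨m + 3, by omega⟩
    · rw [hμ, if_neg (Nat.not_even_iff_odd.mpr h)]
      obtain ⟨m, hm⟩ := h; exact ⟨m + 4, by omega⟩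
  have hμ7 : 7 ≤ μ := by split_ifs at hμ <;> omega
  obtain ⟨p, hp⟩ := hμodd
  have key : ∀ k, a (2*k+1) = μ + 2*k ∧ a (2*k+2) = μ + 2*k - 3 := by
    intro k
    induction k with
    | zero =>
      have h1 : a 1 = μ := ha1
      have h2 := hstep 1 le_rfl
      rw [h1, if_pos ⟨p, hp⟩] at h2
      exact ⟨by simpa using h1, by rw [show 2*0+2 = 1+1 from rfl, h2]; omega⟩
    | succ k ih =>
      obtain ⟨h1, h2⟩ := ih
      have e2 : Even (μ + 2*k - 3) := ⟨p + k - 1, by omega⟩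
      have h3 := hstep (2*k+2) (by omega)
      rw [h2, if_neg (Nat.not_odd_iff_even.mpr e2)] at h3
      have ix : 2*(k+1)+1 = 2*k+2+1 := by ring
      have h3' : a (2*(k+1)+1) = μ + 2*(k+1) := by rw [ix, h3]; omega
      have h4 := hstep (2*(k+1)+1) (by omega)
      rw [h3', if_pos ⟨p + k + 1, by omega⟩] at h4
      exact ⟨h3', by rw [show 2*(k+1)+2 = 2*(k+1)+1+1 from rfl, h4]⟩
  intro j hj
  constructor
  · intro hjo _
    obtain ⟨n, hn⟩ := hjo
    obtain ⟨k, hk⟩ : ∃ k, j = μ + 2*k := ⟨n - p, by omega⟩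
    have := (key k).1
    rw [show 1 + j - μ = 2*k+1 by omega]
    omega
  · intro hje _
    obtain ⟨n, hn⟩ := hje
    obtain ⟨k, hk⟩ : ∃ k, j = μ + 2*k + 1 := ⟨n - p - 1, by omega⟩
    have := (key (k+2)).2
    rw [show 5 + j - μ = 2*(k+2)+2 by omega]
    omega
end

section
/- In the lower-bound construction, for every i with 2 ≤ i ≤ h and every vertex v ≠ s on the path π_i, the subpath of π_{i-1} from s to v is strictly more than β edges longer than the subpath of π_i from s to v: |π_{i-1}[s,v]| > |π_i[s,v]| + β. -/
/-- In the lower-bound construction with odd offset `μ ≥ β+7`,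
for every vertex `v ≠ s` on `π_i`: if `v` is the `k`-th vertex of `π_i` (so
`|π_i[s,v]| = k`) and is vertex number `a k` of `π_{i-1}` (so
`|π_{i-1}[s,v]| = a k`), then `|π_{i-1}[s,v]| > |π_i[s,v]| + β`. -/
theorem stmt_9 (β μ : ℕ) (hμodd : Odd μ) (hμ : β + 7 ≤ μ)
    (a : ℕ → ℕ) (ha1 : a 1 = μ)
    (hstep : ∀ k, 1 ≤ k → a (k + 1) = if Odd (a k) then a k - 3 else a k + 5) :
    ∀ k, 1 ≤ k → k + β < a k := by
  have hμ1 : μ % 2 = 1 := Nat.odd_iff.mp hμodd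
  have key : ∀ k, 1 ≤ k → a k = μ + k - (if Odd k then 1 else 5) := by
    intro k hk
    induction k, hk using Nat.le_induction with
    | base => simp [ha1]
    | succ n hn ih =>
      rw [hstep n hn, ih]
      simp only [Nat.odd_iff]
      split_ifs <;> omega
  intro k hk
  have h := key k hk
  split_ifs at h <;> omega
end

section
/- Define labels l on the vertices of the lower-bound construction by l(s)=0, l(v_{1,j}) = l(v_{1,j-1}) + 5 for odd j and l(v_{1,j}) = l(v_{1,j-1}) - 3 for even j, and set σ(u,v) = l(v) - l(u). Then for every path π_i (i ≥ 1) and every edge (v_{i,j-1}, v_{i,j}) of π_i with j ≥ 2: σ(v_{i,j-1}, v_{i,j}) = -(4i-1) if j is even and σ(v_{i,j-1}, v_{i,j}) = 4i+1 if j is odd. -/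
/-- Labels `l` on the vertices of the lower-bound construction:
`lab i k` denotes `l(v_{i,k})`.  On `π_1` the labels follow `+5` (odd steps) and
`-3` (even steps) from `l(s) = 0`.  For `i ≥ 2`, `π_i` is described over `π_{i-1}`
by the index sequence `a i` (first hop to the odd offset `μ i ≥ 7`, then
alternating backward hops `j ↦ j-3` from odd `j` and forward hops `j ↦ j+5` from
even `j`), so `lab i k = lab (i-1) (a i k)`.  Then for every edge
`(v_{i,j-1}, v_{i,j})` with `j ≥ 2`: `σ(v_{i,j-1},v_{i,j}) = -(4i-1)` if `j` is
even and `= 4i+1` if `j` is odd. -/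
theorem stmt_10 (h : ℕ)
    (lab : ℕ → ℕ → ℤ) (μ : ℕ → ℕ) (a : ℕ → ℕ → ℕ)
    (hlab10 : lab 1 0 = 0)
    (hlab1 : ∀ j : ℕ, 1 ≤ j →
      lab 1 j = lab 1 (j - 1) + (if Odd j then (5 : ℤ) else -3))
    (hμ : ∀ i, 2 ≤ i → i ≤ h → Odd (μ i) ∧ 7 ≤ μ i)
    (ha0 : ∀ i, 2 ≤ i → i ≤ h → a i 0 = 0)
    (ha1 : ∀ i, 2 ≤ i → i ≤ h → a i 1 = μ i)
    (hastep : ∀ i, 2 ≤ i → i ≤ h → ∀ k, 1 ≤ k →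
      a i (k + 1) = if Odd (a i k) then a i k - 3 else a i k + 5)
    (hlabrec : ∀ i, 2 ≤ i → i ≤ h → ∀ k : ℕ, lab i k = lab (i - 1) (a i k)) :
    ∀ i, 1 ≤ i → i ≤ h → ∀ j, 2 ≤ j →
      lab i j - lab i (j - 1) =
        if Even j then -(4 * (i : ℤ) - 1) else 4 * (i : ℤ) + 1 := by
  intro i hi1
  induction i, hi1 using Nat.le_induction with
  | base =>
    intro _ j hj
    have e := hlab1 j (by omega)
    rcases Nat.even_or_odd j with he | ho
    · rw [if_pos he]
      rw [if_neg (Nat.not_odd_iff_even.mpr he)] at e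
      rw [e]; norm_num
    · rw [if_neg (Nat.not_even_iff_odd.mpr ho), if_pos ho] at *
      rw [e]; norm_num
  | succ i hi1 IH =>
    intro hih j hj
    have h2 : 2 ≤ i + 1 := by omega
    have hle : i ≤ h := by omega
    obtain ⟨hμodd, hμ7⟩ := hμ (i + 1) h2 hih
    have hm2 : μ (i + 1) % 2 = 1 := Nat.odd_iff.mp hμodd
    set q := μ (i + 1) with hq
    have ha_odd : ∀ m, a (i + 1) (2 * m + 1) = q + 2 * m ∧
        a (i + 1) (2 * m + 2) = q + 2 * m - 3 := by
      intro m
      induction m with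
      | zero =>
        have h1 : a (i + 1) 1 = q := ha1 (i + 1) h2 hih
        have h2' : a (i + 1) 2 = q - 3 := by
          have := hastep (i + 1) h2 hih 1 (by omega)
          rw [h1, if_pos hμodd] at this
          simpa using this
        exact ⟨by simpa using h1, by simpa using h2'⟩
      | succ m ihm =>
        obtain ⟨ho, he⟩ := ihm
        have hodd1 : a (i + 1) (2 * (m + 1) + 1) = q + 2 * (m + 1) := by
          have hs := hastep (i + 1) h2 hih (2 * m + 2) (by omega)
          rw [he] at hs
          rw [if_neg (by rw [Nat.odd_iff]; omega)] at hs
          have : a (i + 1) (2 * m + 2 + 1) = q + 2 * m - 3 + 5 := hs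
          rw [show 2 * (m + 1) + 1 = 2 * m + 2 + 1 by ring, this]; omega
        have heven1 : a (i + 1) (2 * (m + 1) + 2) = q + 2 * (m + 1) - 3 := by
          have hs := hastep (i + 1) h2 hih (2 * (m + 1) + 1) (by omega)
          rw [hodd1] at hs
          rw [if_pos (by rw [Nat.odd_iff]; omega)] at hs
          exact hs
        exact ⟨hodd1, heven1⟩
    have D : ∀ t : ℕ, 1 ≤ t → t % 2 = 0 →
        lab i (t + 1) - lab i t = 4 * (i : ℤ) + 1 := by
      intro t ht hpar
      have := IH hle (t + 1) (by omega)
      rw [if_neg (by rw [Nat.even_iff]; omega)] at this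
      simpa using this
    have E : ∀ t : ℕ, 1 ≤ t → t % 2 = 1 →
        lab i (t + 1) - lab i t = -(4 * (i : ℤ) - 1) := by
      intro t ht hpar
      have := IH hle (t + 1) (by omega)
      rw [if_pos (by rw [Nat.even_iff]; omega)] at this
      simpa using this
    have hrec := hlabrec (i + 1) h2 hih
    simp only [Nat.add_sub_cancel] at hrec
    rcases Nat.even_or_odd j with hje | hjo
    · -- j even: j = 2m+2
      rw [if_pos hje]
      obtain ⟨m', hm'⟩ := hje
      have hm : j = 2 * (m' - 1) + 2 := by omega
      set m := m' - 1 with hmm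
      have h1 : lab (i + 1) j = lab i (q + 2 * m - 3) := by
        rw [hrec j, hm, (ha_odd m).2]
      have h0 : lab (i + 1) (j - 1) = lab i (q + 2 * m) := by
        rw [hrec (j - 1), show j - 1 = 2 * m + 1 by omega, (ha_odd m).1]
      rw [h1, h0]
      set t := q + 2 * m - 3 with ht
      have htq : q + 2 * m = t + 3 := by omega
      have e1 := D t (by omega) (by omega)
      have e2 : lab i (t + 2) - lab i (t + 1) = -(4 * (i : ℤ) - 1) := by
        have := E (t + 1) (by omega) (by omega)
        convert this using 3 <;> omega
      have e3 : lab i (t + 3) - lab i (t + 2) = 4 * (i : ℤ) + 1 := by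
        have := D (t + 2) (by omega) (by omega)
        convert this using 3 <;> omega
      rw [htq]
      push_cast
      linarith [e1, e2, e3]
    · -- j odd: j = 2m+1, m ≥ 1
      rw [if_neg (Nat.not_even_iff_odd.mpr hjo)]
      obtain ⟨m, hm⟩ := hjo
      have hm1 : 1 ≤ m := by omega
      have h1 : lab (i + 1) j = lab i (q + 2 * m) := by
        rw [hrec j, hm, (ha_odd m).1]
      have h0 : lab (i + 1) (j - 1) = lab i (q + 2 * (m - 1) - 3) := by
        rw [hrec (j - 1), show j - 1 = 2 * (m - 1) + 2 by omega, (ha_odd (m - 1)).2]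
      rw [h1, h0]
      set t := q + 2 * (m - 1) - 3 with ht
      have htq : q + 2 * m = t + 5 := by omega
      have e1 := D t (by omega) (by omega)
      have e2 : lab i (t + 2) - lab i (t + 1) = -(4 * (i : ℤ) - 1) := by
        have := E (t + 1) (by omega) (by omega)
        convert this using 3 <;> omega
      have e3 : lab i (t + 3) - lab i (t + 2) = 4 * (i : ℤ) + 1 := by
        have := D (t + 2) (by omega) (by omega)
        convert this using 3 <;> omega
      have e4 : lab i (t + 4) - lab i (t + 3) = -(4 * (i : ℤ) - 1) := by
        have := E (t + 3) (by omega) (by omega)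
        convert this using 3 <;> omega
      have e5 : lab i (t + 5) - lab i (t + 4) = 4 * (i : ℤ) + 1 := by
        have := D (t + 4) (by omega) (by omega)
        convert this using 3 <;> omega
      rw [htq]
      push_cast
      linarith [e1, e2, e3, e4, e5]
end

section
/- With σ-types as in the labeling lemma, for i < j the type sets {4i-1, 4i+1} and {4j-1, 4j+1} are disjoint (since 4i+1 < 4j-1 when i < j). Consequently, any two distinct paths π_i and π_j of the construction share no edge not incident to s, and since their edges incident to s differ as well, the paths π_1,...,π_h are pairwise edge-disjoint. -/
/-- For `i < j` the type sets `{4i-1, 4i+1}` and `{4j-1, 4j+1}`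
are disjoint.  Consequently, if every edge of `π_i` not incident to `s` has type
in `{4i-1, 4i+1}` and the unique edge of `π_i` incident to `s` goes to `w i`, with
the `w i` pairwise distinct, then the edge sets of the paths `π_1, …, π_h` are
pairwise disjoint. -/
theorem stmt_11 {V : Type*} (s : V) (h : ℕ)
    (E : ℕ → Set (Sym2 V)) (w : ℕ → V) (typ : Sym2 V → ℕ)
    (hs : ∀ i, 1 ≤ i → i ≤ h → ∀ e ∈ E i, s ∈ e → e = s(s, w i))
    (hw : ∀ i j, 1 ≤ i → i < j → j ≤ h → w i ≠ w j)
    (htyp : ∀ i, 1 ≤ i → i ≤ h → ∀ e ∈ E i, s ∉ e →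
      typ e = 4 * i - 1 ∨ typ e = 4 * i + 1) :
    (∀ i j : ℕ, 1 ≤ i → i < j →
      Disjoint ({4 * i - 1, 4 * i + 1} : Set ℕ) ({4 * j - 1, 4 * j + 1} : Set ℕ)) ∧
    (∀ i j, 1 ≤ i → i < j → j ≤ h → Disjoint (E i) (E j)) := by
  constructor
  · intro i j hi hij
    rw [Set.disjoint_left]
    intro x hx1 hx2
    simp only [Set.mem_insert_iff, Set.mem_singleton_iff] at hx1 hx2
    omega
  · intro i j hi hij hj
    rw [Set.disjoint_left]
    intro e hei hej
    by_cases hse : s ∈ e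
    · have h1 := hs i hi (le_of_lt (lt_of_lt_of_le hij hj)) e hei hse
      have h2 := hs j (le_trans hi (le_of_lt hij)) hj e hej hse
      have : w i = w j := by
        have := h1.symm.trans h2
        rcases Sym2.eq_iff.mp (h1.symm.trans h2) with ⟨_, h⟩ | ⟨h', h''⟩
        · exact h
        · rw [h'', ← h']
      exact hw i j hi hij hj this
    · have h1 := htyp i hi (le_of_lt (lt_of_lt_of_le hij hj)) e hei hse
      have h2 := htyp j (le_trans hi (le_of_lt hij)) hj e hej hse
      omega
end

section
/- Suppose every static graph on n' vertices admits an (α,β)-spanner with at most f(n') edges. Then every temporal graph G on n vertices with lifetime L admits a temporal (α, L·β)-spanner H with at most L·f(n) edges: namely, letting G_i be the static graph of edges with label i and H_i an (α,β)-spanner of G_i, the union H of the H_i (with the original labels) satisfies d_H(u,v) ≤ α·d_G(u,v) + L·β for all u,v. -/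
open Finset

section TemporalWalk

variable {V : Type*} {adj adj' : V → V → Prop} {lab : V → V → ℕ} {u v w : V} {k : ℕ}
  {p : ℕ → V}

lemma isTempWalk_of_label_eq {i : ℕ} (h0 : p 0 = u) (hk : p k = v)
    (hadj : ∀ t < k, adj (p t) (p (t + 1))) (hlab : ∀ t < k, lab (p t) (p (t + 1)) = i) :
    IsTempWalk adj lab u v k p :=
  ⟨h0, hk, hadj, fun t ht => (hlab t (by omega)).trans (hlab (t + 1) ht).symm |>.le⟩

lemma IsTempWalk.monotoneOn_label (hp : IsTempWalk adj lab u v k p) :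
    MonotoneOn (fun t => lab (p t) (p (t + 1))) (Set.Iio k) :=
  monotoneOn_of_le_succ Set.ordConnected_Iio fun t _ _ ht => by
    simp only [Order.succ_eq_add_one, Set.mem_Iio] at ht ⊢
    exact hp.2.2.2 t ht

lemma IsTempWalk.drop (hp : IsTempWalk adj lab u v k p) {j : ℕ} (hj : j ≤ k) :
    IsTempWalk adj lab (p j) v (k - j) (fun t => p (j + t)) := by
  obtain ⟨-, hk, hadj, hmono⟩ := hp
  refine ⟨rfl, by simpa only [Nat.add_sub_cancel' hj], fun t ht => hadj (j + t) (by omega),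
    fun t ht => hmono (j + t) (by omega)⟩

lemma IsTempWalk.exists_prefix_label_eq (hp : IsTempWalk adj lab u v k p) (hk : 0 < k) :
    ∃ j, 0 < j ∧ j ≤ k ∧ (∀ t < j, lab (p t) (p (t + 1)) = lab (p 0) (p 1)) ∧
      ∀ t, j ≤ t → t < k → lab (p 0) (p 1) < lab (p t) (p (t + 1)) := by
  have hex : ∃ j, j = k ∨ (j < k ∧ lab (p 0) (p 1) < lab (p j) (p (j + 1))) := ⟨k, .inl rfl⟩
  have hmono := hp.monotoneOn_label
  refine ⟨Nat.find hex, ?_, ?_, fun t ht => ?_, fun t ht htk => ?_⟩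
  · simp only [Nat.pos_iff_ne_zero, Ne, Nat.find_eq_zero, zero_add, lt_irrefl, and_false,
      or_false]
    omega
  · exact Nat.find_min' hex (.inl rfl)
  · have hlt := Nat.find_min hex ht
    have htk : t < k := ht.trans_le (Nat.find_min' hex (.inl rfl))
    exact le_antisymm (by omega) (hmono (show 0 < k by omega) htk (Nat.zero_le t))
  · rcases Nat.find_spec hex with h | ⟨hjk, hlt⟩
    · omega
    · exact hlt.trans_le (hmono hjk htk ht)

def spliceAt (p q : ℕ → V) (a : ℕ) : ℕ → V := fun t => if t ≤ a then p t else q (t - a)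

lemma spliceAt_of_le {q : ℕ → V} {a t : ℕ} (ht : t ≤ a) : spliceAt p q a t = p t := if_pos ht

lemma spliceAt_add {q : ℕ → V} {a : ℕ} (h : p a = q 0) (t : ℕ) :
    spliceAt p q a (a + t) = q t := by
  rcases t.eq_zero_or_pos with rfl | ht
  · simpa [spliceAt] using h
  · simp [spliceAt, show ¬ a + t ≤ a by omega]

lemma forall_spliceAt_of_forall {q : ℕ → V} {a b : ℕ} (h : p a = q 0) (P : V → V → Prop)
    (hp : ∀ t < a, P (p t) (p (t + 1))) (hq : ∀ t < b, P (q t) (q (t + 1))) :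
    ∀ t < a + b, P (spliceAt p q a t) (spliceAt p q a (t + 1)) := by
  intro t ht
  rcases lt_or_ge t a with hta | hat
  · rw [spliceAt_of_le hta.le, spliceAt_of_le hta]
    exact hp t hta
  · obtain ⟨s, rfl⟩ := Nat.exists_eq_add_of_le hat
    rw [spliceAt_add h, add_assoc, spliceAt_add h]
    exact hq s (by omega)

lemma IsTempWalk.spliceAt {q : ℕ → V} {a b : ℕ} (hp : IsTempWalk adj lab u w a p)
    (hq : IsTempWalk adj lab w v b q)
    (hpq : ∀ s < a, ∀ t < b, lab (p s) (p (s + 1)) ≤ lab (q t) (q (t + 1))) :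
    IsTempWalk adj lab u v (a + b) (spliceAt p q a) := by
  obtain ⟨hp0, hpa, hpadj, hpmono⟩ := hp
  obtain ⟨hq0, hqb, hqadj, hqmono⟩ := hq
  have hjoin : p a = q 0 := hpa.trans hq0.symm
  refine ⟨by rw [spliceAt_of_le (Nat.zero_le a), hp0], by rw [spliceAt_add hjoin, hqb],
    forall_spliceAt_of_forall hjoin adj hpadj hqadj, fun t ht => ?_⟩
  rcases lt_or_ge (t + 1) a with hta | hat
  · rw [spliceAt_of_le (by omega), spliceAt_of_le hta.le, spliceAt_of_le hta]
    exact hpmono t hta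
  rcases lt_or_ge t a with hta' | hat'
  · obtain rfl : a = t + 1 := by omega
    rw [spliceAt_of_le (by omega), spliceAt_of_le le_rfl, show t + 2 = t + 1 + 1 by rfl,
      spliceAt_add hjoin 1]
    simpa only [← hjoin, zero_add] using hpq t (by omega) 0 (by omega)
  · obtain ⟨s, rfl⟩ := Nat.exists_eq_add_of_le hat'
    rw [spliceAt_add hjoin, add_assoc, spliceAt_add hjoin, add_assoc, spliceAt_add hjoin]
    exact hqmono s (by omega)

lemma tdist_le_of_isTempWalk (hp : IsTempWalk adj lab u v k p) : tdist adj lab u v ≤ k :=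
  sInf_le ⟨k, rfl, p, hp⟩

lemma exists_isTempWalk_of_tdist_ne_top (h : tdist adj lab u v ≠ ⊤) :
    ∃ k p, IsTempWalk adj lab u v k p ∧ tdist adj lab u v = k := by
  have hne : {m : ℕ∞ | ∃ k : ℕ, m = k ∧ ∃ p, IsTempWalk adj lab u v k p}.Nonempty := by
    by_contra hempty
    exact h (by rw [tdist, Set.not_nonempty_iff_eq_empty.1 hempty, sInf_empty])
  obtain ⟨k, hk, p, hp⟩ := csInf_mem hne
  exact ⟨k, p, hp, hk⟩

lemma tdist_le_mul_add {α c : ℕ} (hα : 1 ≤ α)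
    (h : ∀ k p, IsTempWalk adj lab u v k p →
      ∃ k' q, IsTempWalk adj' lab u v k' q ∧ k' ≤ α * k + c) :
    tdist adj' lab u v ≤ α * tdist adj lab u v + c := by
  by_cases htop : tdist adj lab u v = ⊤
  · rw [htop, ENat.mul_top (by exact_mod_cast (Nat.one_le_iff_ne_zero.1 hα)), top_add]
    exact le_top
  obtain ⟨k, p, hp, hk⟩ := exists_isTempWalk_of_tdist_ne_top htop
  obtain ⟨k', q, hq, hk'⟩ := h k p hp
  calc tdist adj' lab u v ≤ k' := tdist_le_of_isTempWalk hq
    _ ≤ ((α * k + c : ℕ) : ℕ∞) := by exact_mod_cast hk'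
    _ = α * tdist adj lab u v + c := by rw [hk]; push_cast; rfl

/-- The bound reads `k' ≤ α k + (L - m) β`, written without truncated subtraction: each of the
labels in `(m, L]` costs at most one additive `β`. -/
theorem exists_isTempWalk_of_segments {L α β : ℕ} (hle : ∀ x y, adj x y → lab x y ≤ L)
    (hseg : ∀ (i j : ℕ) (p : ℕ → V), 0 < j →
      (∀ t < j, adj (p t) (p (t + 1)) ∧ lab (p t) (p (t + 1)) = i) →
      ∃ j' q, IsTempWalk adj' lab (p 0) (p j) j' q ∧
        (∀ t < j', lab (q t) (q (t + 1)) = i) ∧ j' ≤ α * j + β)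
    {m : ℕ} (hm : m ≤ L) (hp : IsTempWalk adj lab u v k p)
    (hlab : ∀ t < k, m < lab (p t) (p (t + 1))) :
    ∃ k' q, IsTempWalk adj' lab u v k' q ∧ (∀ t < k', m < lab (q t) (q (t + 1))) ∧
      k' + m * β ≤ α * k + L * β := by
  induction k using Nat.strong_induction_on generalizing m u p with
  | _ k ih =>
  rcases k.eq_zero_or_pos with rfl | hk
  · refine ⟨0, p, ⟨hp.1, hp.2.1, by simp, by simp⟩, by simp, ?_⟩
    simpa using Nat.mul_le_mul_right β hm
  set i := lab (p 0) (p 1)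
  obtain ⟨j, hj, hjk, hpre, hsuf⟩ := hp.exists_prefix_label_eq hk
  obtain ⟨d, q₁, hq₁, hq₁lab, hd⟩ :=
    hseg i j p hj fun t ht => ⟨hp.2.2.1 t (by omega), hpre t ht⟩
  have hiL : i ≤ L := hle _ _ (hp.2.2.1 0 hk)
  obtain ⟨e, q₂, hq₂, hq₂lab, he⟩ := ih (k - j) (by omega) hiL
    (hp.drop hjk) fun t ht => hsuf (j + t) (by omega) (by omega)
  have hmi : m < i := hlab 0 hk
  refine ⟨d + e, spliceAt q₁ q₂ d, ?_, ?_, ?_⟩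
  · rw [hp.1] at hq₁
    exact hq₁.spliceAt hq₂ fun s hs t ht => (hq₁lab s hs).trans_le (hq₂lab t ht).le
  · exact forall_spliceAt_of_forall (hq₁.2.1.trans hq₂.1.symm) (fun x y => m < lab x y)
      (fun t ht => (hq₁lab t ht).symm ▸ hmi) fun t ht => hmi.trans (hq₂lab t ht)
  · have hsplit : α * j + α * (k - j) = α * k := by rw [← Nat.mul_add, Nat.add_sub_cancel' hjk]
    have hmβ : m * β + β ≤ i * β := by simpa [Nat.succ_mul] using Nat.mul_le_mul_right β hmi
    omega

end TemporalWalk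

/-- The static graph `G_i` of the edges of `G` carrying label `i`. -/
def labelGraph {V : Type*} (G : SimpleGraph V) (lab : V → V → ℕ)
    (hsym : ∀ u v, lab u v = lab v u) (i : ℕ) : SimpleGraph V where
  Adj x y := G.Adj x y ∧ lab x y = i
  symm := ⟨fun x y h => ⟨h.1.symm, (hsym y x).trans h.2⟩⟩
  loopless := ⟨fun x h => G.loopless.irrefl x h.1⟩

lemma labelGraph_le {V : Type*} (G : SimpleGraph V) (lab : V → V → ℕ)
    (hsym : ∀ u v, lab u v = lab v u) (i : ℕ) : labelGraph G lab hsym i ≤ G :=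
  fun _ _ h => h.1

lemma SimpleGraph.exists_walk_length_eq_of_adj {V : Type*} (G : SimpleGraph V) {p : ℕ → V}
    {j : ℕ} (hp : ∀ t < j, G.Adj (p t) (p (t + 1))) :
    ∃ w : G.Walk (p 0) (p j), w.length = j := by
  induction j with
  | zero => exact ⟨.nil, rfl⟩
  | succ j ih =>
    obtain ⟨w, hw⟩ := ih fun t ht => hp t (by omega)
    exact ⟨w.concat (hp j j.lt_succ_self), by rw [SimpleGraph.Walk.length_concat, hw]⟩

section Spanner

variable {V : Type*} {lab : V → V → ℕ} {α β : ℕ}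

lemma exists_isTempWalk_of_labelGraph {G H H' : SimpleGraph V} {hsym : ∀ u v, lab u v = lab v u}
    {i : ℕ} (hH'i : H' ≤ labelGraph G lab hsym i) (hH' : H' ≤ H)
    (hspan : ∀ u v, (labelGraph G lab hsym i).Reachable u v →
      H'.Reachable u v ∧ H'.dist u v ≤ α * (labelGraph G lab hsym i).dist u v + β)
    {p : ℕ → V} {j : ℕ} (hp : ∀ t < j, (labelGraph G lab hsym i).Adj (p t) (p (t + 1))) :
    ∃ j' q, IsTempWalk H.Adj lab (p 0) (p j) j' q ∧
      (∀ t < j', lab (q t) (q (t + 1)) = i) ∧ j' ≤ α * j + β := by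
  obtain ⟨w, hw⟩ := (labelGraph G lab hsym i).exists_walk_length_eq_of_adj hp
  obtain ⟨hreach, hdist⟩ := hspan _ _ w.reachable
  obtain ⟨w', hw'⟩ := hreach.exists_walk_length_eq_dist
  have hlab : ∀ t < w'.length, lab (w'.getVert t) (w'.getVert (t + 1)) = i :=
    fun t ht => (hH'i (w'.adj_getVert_succ ht)).2
  refine ⟨w'.length, w'.getVert, ?_, hlab, ?_⟩
  · exact isTempWalk_of_label_eq w'.getVert_zero w'.getVert_length
      (fun t ht => hH' (w'.adj_getVert_succ ht)) hlab
  · calc w'.length = H'.dist (p 0) (p j) := hw'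
      _ ≤ α * (labelGraph G lab hsym i).dist (p 0) (p j) + β := hdist
      _ ≤ α * j + β := by gcongr; exact (SimpleGraph.dist_le w).trans_eq hw

end Spanner

/-- If every static graph on `n'` vertices admits an
`(α,β)`-spanner with at most `f n'` edges, then every temporal graph `G` on `n`
vertices with lifetime `L` (labels in `{1,…,L}`) admits a temporal
`(α, L·β)`-spanner with at most `L·f n` edges. -/
theorem stmt_15 (n L α β : ℕ) (hα : 1 ≤ α) (f : ℕ → ℕ)
    (hstatic : ∀ (n' : ℕ) (G' : SimpleGraph (Fin n')),
      ∃ H' : SimpleGraph (Fin n'), H' ≤ G' ∧ H'.edgeSet.ncard ≤ f n' ∧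
        ∀ u v : Fin n', G'.Reachable u v →
          H'.Reachable u v ∧ H'.dist u v ≤ α * G'.dist u v + β)
    (G : SimpleGraph (Fin n)) (lab : Fin n → Fin n → ℕ)
    (hsym : ∀ u v, lab u v = lab v u)
    (hlife : ∀ u v : Fin n, G.Adj u v → lab u v ∈ Finset.Icc 1 L) :
    ∃ H : SimpleGraph (Fin n), H ≤ G ∧ H.edgeSet.ncard ≤ L * f n ∧
      ∀ u v : Fin n,
        tdist H.Adj lab u v ≤
          (α : ℕ∞) * tdist G.Adj lab u v + ((L * β : ℕ) : ℕ∞) := by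
  choose Hsp hsub hcard hspan using fun i => hstatic n (labelGraph G lab hsym i)
  have hHsp : ∀ i ∈ Icc 1 L, Hsp i ≤ ⨆ i ∈ Icc 1 L, Hsp i :=
    fun i hi => le_iSup₂ (f := fun i (_ : i ∈ Icc 1 L) => Hsp i) i hi
  refine ⟨⨆ i ∈ Icc 1 L, Hsp i, iSup₂_le fun i _ => (hsub i).trans (labelGraph_le G lab hsym i),
    ?_, fun u v => tdist_le_mul_add hα fun k p hp => ?_⟩
  · calc (⨆ i ∈ Icc 1 L, Hsp i).edgeSet.ncard ≤ ∑ i ∈ Icc 1 L, (Hsp i).edgeSet.ncard := by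
          simpa only [SimpleGraph.edgeSet_iSup] using (Icc 1 L).set_ncard_biUnion_le _
      _ ≤ ∑ _i ∈ Icc 1 L, f n := sum_le_sum fun i _ => hcard i
      _ = L * f n := by simp
  have hseg (i j : ℕ) (q : ℕ → Fin n) (hj : 0 < j)
      (hq : ∀ t < j, (labelGraph G lab hsym i).Adj (q t) (q (t + 1))) :=
    exists_isTempWalk_of_labelGraph (hsub i)
      (hHsp i ((hq 0 hj).2 ▸ hlife _ _ (hq 0 hj).1)) (hspan i) hq
  obtain ⟨k', q, hq, -, hk'⟩ := exists_isTempWalk_of_segments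
    (fun x y h => (mem_Icc.1 (hlife x y h)).2) hseg (Nat.zero_le L) hp
    fun t ht => (mem_Icc.1 (hlife _ _ (hp.2.2.1 t ht))).1
  exact ⟨k', q, hq, by simpa using hk'⟩
end

section
/- In the temporal 3-spanner construction: for every pair of distinct vertices u,v of the temporal clique G, the spanner H (consisting of all sets E_u, the first-augmentation edges {u}×S_{z(x)}, and the second-augmentation edges {z(x)}×V) contains a temporal path from u to v of length at most 3. -/
/-- Correctness of the temporal 3-spanner of a temporal clique:
`S u` is the endpoint set of the lowest-label edges at `u` (so any edge outside
`E_u` has label at least that of every edge of `E_u`), `R` hits all the sets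
`S u`, each `u` belongs to the cluster of center `cl u ∈ S u ∩ R`, and
`z x` is a member of the cluster of `x` maximizing `λ(x,·)`.  The spanner `H`
contains all sets `E_u` (edges from `u` to `S u`), the first-augmentation edges
`{u} × S (z (cl u))`, and all edges incident to special vertices `z x`, `x ∈ R`.
Then any two distinct vertices `u, v` are joined in `H` by a temporal path of
length at most `3`. -/
theorem stmt_17 {V : Type*} [DecidableEq V]
    (lab : V → V → ℕ) (hsym : ∀ u v : V, lab u v = lab v u)
    (S : V → Finset V) (hSirr : ∀ u : V, u ∉ S u)
    (hlow : ∀ u w w' : V, w' ∈ S u → w ∉ S u → w ≠ u → lab u w' ≤ lab u w)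
    (R : Finset V) (cl : V → V)
    (hclR : ∀ u : V, cl u ∈ R) (hclS : ∀ u : V, cl u ∈ S u)
    (z : V → V)
    (hzC : ∀ x ∈ R, cl (z x) = x)
    (hzmax : ∀ x ∈ R, ∀ w : V, cl w = x → lab x w ≤ lab x (z x))
    (H : V → V → Prop) (hHsym : ∀ u v : V, H u v → H v u)
    (hH1 : ∀ u v : V, u ≠ v → v ∈ S u → H u v)
    (hH2 : ∀ u v : V, u ≠ v → v ∈ S (z (cl u)) → H u v)
    (hH3 : ∀ x ∈ R, ∀ v : V, v ≠ z x → H (z x) v) :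
    ∀ u v : V, u ≠ v → ∃ k ≤ 3, ∃ p : ℕ → V, IsTempWalk H lab u v k p := by
  intro u v huv
  set x := cl u with hx
  have hxSu : x ∈ S u := hclS u
  have hxR : x ∈ R := hclR u
  have hxu : x ≠ u := fun h => hSirr u (h ▸ hxSu)
  have hxSz : x ∈ S (z x) := by have h := hclS (z x); rwa [hzC x hxR] at h
  have hzxx : z x ≠ x := fun h => hSirr x (by rwa [h] at hxSz)
  have hlab1 : lab u x ≤ lab x (z x) := by
    rw [hsym]; exact hzmax x hxR u rfl
  have hHux : H u x := hH1 u x (Ne.symm hxu) hxSu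
  have hHxz : H x (z x) := hHsym _ _ (hH3 x hxR x (Ne.symm hzxx))
  by_cases h1 : v ∈ S u
  · exact ⟨1, by norm_num, fun i => if i = 0 then u else v,
      by simp, by simp, fun i hi => by
        have : i = 0 := by omega
        subst this; simpa using hH1 u v huv h1,
      fun i hi => by omega⟩
  · by_cases h2 : v = z x
    · refine ⟨2, by norm_num, fun i => if i = 0 then u else if i = 1 then x else v,
        by simp, by simp, fun i hi => ?_, fun i hi => ?_⟩
      · have : i = 0 ∨ i = 1 := by omega
        rcases this with h | h <;> subst h <;> simp [h2, hHux, hHxz]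
      · have : i = 0 := by omega
        subst this; simpa [h2] using hlab1
    · by_cases h3 : v ∈ S (z x)
      · exact ⟨1, by norm_num, fun i => if i = 0 then u else v,
          by simp, by simp, fun i hi => by
            have : i = 0 := by omega
            subst this; simpa using hH2 u v huv h3,
          fun i hi => by omega⟩
      · have hlab2 : lab x (z x) ≤ lab (z x) v := by
          rw [hsym]; exact hlow (z x) v x hxSz h3 h2
        refine ⟨3, le_refl 3,
          fun i => if i = 0 then u else if i = 1 then x else if i = 2 then z x else v,
          by simp, by simp, fun i hi => ?_, fun i hi => ?_⟩
        · have : i = 0 ∨ i = 1 ∨ i = 2 := by omega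
          rcases this with h | h | h <;> subst h <;>
            simp [hHux, hHxz, hH3 x hxR v h2]
        · have : i = 0 ∨ i = 1 := by omega
          rcases this with h | h <;> subst h <;> simpa using (by first | exact hlab1 | exact hlab2)
end

section
/- For a temporal graph G with lifetime L and source s, shortest τ-restricted temporal paths satisfy the suboptimality property: if π is a shortest τ-restricted temporal path from s to v, u ≠ s is an intermediate vertex of π, and τ' is the label of the edge entering u on π[s,u], then π[s,u] is a shortest τ'-restricted temporal path from s to u. Consequently G admits a single-source temporal preserver w.r.t. s (a subgraph H with d_H^{(τ)}(s,v) = d_G^{(τ)}(s,v) for all v and τ) with at most L·n edges. -/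
/-- The `τ`-restricted temporal distance from `u` to `v`: the minimum length of a
temporal path all of whose labels are at most `τ` (`⊤` if none exists). -/
noncomputable def tdistR {V : Type*} (adj : V → V → Prop) (lab : V → V → ℕ)
    (τ : ℕ) (u v : V) : ℕ∞ :=
  sInf {m : ℕ∞ | ∃ k : ℕ, m = (k : ℕ∞) ∧ ∃ p : ℕ → V,
    IsTempWalk adj lab u v k p ∧ ∀ i, i < k → lab (p i) (p (i + 1)) ≤ τ}

section helpers
variable {V : Type*} {adj : V → V → Prop} {lab : V → V → ℕ}

lemma tdistR_le {τ : ℕ} {u v : V} {k : ℕ} {p : ℕ → V}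
    (hw : IsTempWalk adj lab u v k p)
    (hr : ∀ i, i < k → lab (p i) (p (i + 1)) ≤ τ) :
    tdistR adj lab τ u v ≤ (k : ℕ∞) :=
  sInf_le ⟨k, rfl, p, hw, hr⟩

lemma tdistR_anti {τ τ' : ℕ} (h : τ' ≤ τ) (u v : V) :
    tdistR adj lab τ u v ≤ tdistR adj lab τ' u v := by
  apply sInf_le_sInf
  rintro m ⟨k, hm, p, hw, hr⟩
  exact ⟨k, hm, p, hw, fun i hi => (hr i hi).trans h⟩

lemma tdistR_mono_adj {adj' : V → V → Prop} (hadj : ∀ a b, adj a b → adj' a b)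
    (τ : ℕ) (u v : V) : tdistR adj' lab τ u v ≤ tdistR adj lab τ u v := by
  apply sInf_le_sInf
  rintro m ⟨k, hm, p, ⟨h0, hk, ha, hmo⟩, hr⟩
  exact ⟨k, hm, p, ⟨h0, hk, fun i hi => hadj _ _ (ha i hi), hmo⟩, hr⟩

lemma tdistR_witness {τ : ℕ} {u v : V} {m : ℕ}
    (h : tdistR adj lab τ u v = (m : ℕ∞)) :
    ∃ p, IsTempWalk adj lab u v m p ∧ ∀ i, i < m → lab (p i) (p (i + 1)) ≤ τ := by
  have h1 : tdistR adj lab τ u v < ((m + 1 : ℕ) : ℕ∞) := by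
    rw [h]; exact_mod_cast Nat.lt_succ_self m
  obtain ⟨b, hb, hlt⟩ := sInf_lt_iff.mp h1
  have hge : (m : ℕ∞) ≤ b := h ▸ sInf_le hb
  obtain ⟨k, rfl, p, hw, hr⟩ := hb
  have : k = m := by
    have h1 : m ≤ k := by exact_mod_cast hge
    have h2 : k < m + 1 := by exact_mod_cast hlt
    omega
  subst this
  exact ⟨p, hw, hr⟩

lemma lab_chain {k : ℕ} {p : ℕ → V}
    (hm : ∀ i, i + 1 < k → lab (p i) (p (i + 1)) ≤ lab (p (i + 1)) (p (i + 2))) :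
    ∀ j, j + 1 ≤ k → ∀ i, i ≤ j → lab (p i) (p (i + 1)) ≤ lab (p j) (p (j + 1)) := by
  intro j
  induction j with
  | zero => intro _ i hi; interval_cases i; exact le_rfl
  | succ j ih =>
    intro hj i hi
    rcases Nat.lt_or_ge i (j + 1) with h | h
    · exact (ih (by omega) i (by omega)).trans (hm j (by omega))
    · have : i = j + 1 := by omega
      subst this; exact le_rfl

/-- Splicing: replace the prefix `p[0..j]` of a walk by another walk `q` from `s`
to `p j`. Only the suffix properties of `p` are needed. -/
lemma splice {τ : ℕ} {s v : V} {k j m : ℕ} {p q : ℕ → V}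
    (hjk : j ≤ k) (hpv : p k = v)
    (hpadj : ∀ i, j ≤ i → i < k → adj (p i) (p (i + 1)))
    (hpmono : ∀ i, j ≤ i → i + 1 < k → lab (p i) (p (i + 1)) ≤ lab (p (i + 1)) (p (i + 2)))
    (hpres : ∀ i, j ≤ i → i < k → lab (p i) (p (i + 1)) ≤ τ)
    (hq : IsTempWalk adj lab s (p j) m q)
    (hqres : ∀ i, i < m → lab (q i) (q (i + 1)) ≤ τ)
    (hcross : 1 ≤ m → j < k → lab (q (m - 1)) (q m) ≤ lab (p j) (p (j + 1))) :
    ∃ r, IsTempWalk adj lab s v (m + (k - j)) r ∧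
      ∀ i, i < m + (k - j) → lab (r i) (r (i + 1)) ≤ τ := by
  obtain ⟨hq0, hqm, hqa, hqmo⟩ := hq
  set r : ℕ → V := fun i => if i < m then q i else p (i - m + j) with hrdef
  have hrle : ∀ i, i ≤ m → r i = q i := by
    intro i hi
    simp only [hrdef]
    by_cases h : i < m
    · rw [if_pos h]
    · have hh : i = m := le_antisymm hi (le_of_not_gt h)
      rw [if_neg h, hh, Nat.sub_self, Nat.zero_add, hqm]
  have hrge : ∀ i, m ≤ i → r i = p (i - m + j) := by
    intro i hi
    simp only [hrdef]
    by_cases h : i < m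
    · exact absurd hi (not_le.mpr h)
    · rw [if_neg h]
  refine ⟨r, ⟨?_, ?_, ?_, ?_⟩, ?_⟩
  · rw [hrle 0 (Nat.zero_le m), hq0]
  · rw [hrge (m + (k - j)) (by omega)]
    have e : m + (k - j) - m + j = k := by omega
    rw [e, hpv]
  · intro i hi
    rcases Nat.lt_or_ge (i + 1) (m + 1) with h | h
    · rw [hrle i (by omega), hrle (i + 1) (by omega)]
      exact hqa i (by omega)
    · rw [hrge i (by omega), hrge (i + 1) (by omega)]
      have e : i + 1 - m + j = (i - m + j) + 1 := by omega
      rw [e]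
      exact hpadj _ (by omega) (by omega)
  · intro i hi
    rcases Nat.lt_or_ge (i + 2) (m + 1) with h | h
    · rw [hrle i (by omega), hrle (i + 1) (by omega), hrle (i + 2) (by omega)]
      exact hqmo i (by omega)
    · rcases Nat.lt_or_ge (i + 1) (m + 1) with h2 | h2
      · -- i + 1 = m
        have him : i + 1 = m := by omega
        have hjlt : j < k := by omega
        rw [hrle i (by omega), hrle (i + 1) (by omega), hrge (i + 2) (by omega)]
        have e : i + 2 - m + j = j + 1 := by omega
        rw [e]
        have hthis := hcross (by omega) hjlt
        have e2 : m - 1 = i := by omega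
        rw [e2, ← him] at hthis
        have e3 : q (i + 1) = p j := by rw [him, hqm]
        rw [e3] at hthis ⊢
        exact hthis
      · rw [hrge i (by omega), hrge (i + 1) (by omega), hrge (i + 2) (by omega)]
        have e1 : i + 1 - m + j = (i - m + j) + 1 := by omega
        have e2 : i + 2 - m + j = (i - m + j) + 2 := by omega
        rw [e1, e2]
        exact hpmono _ (by omega) (by omega)
  · intro i hi
    rcases Nat.lt_or_ge (i + 1) (m + 1) with h | h
    · rw [hrle i (by omega), hrle (i + 1) (by omega)]
      exact hqres i (by omega)
    · rw [hrge i (by omega), hrge (i + 1) (by omega)]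
      have e : i + 1 - m + j = (i - m + j) + 1 := by omega
      rw [e]
      exact hpres _ (by omega) (by omega)

end helpers

section suboptS
variable {V : Type*} {adj : V → V → Prop} {lab : V → V → ℕ}

lemma subopt {s v : V} {τ k : ℕ} {p : ℕ → V}
    (hw : IsTempWalk adj lab s v k p)
    (hres : ∀ i, i < k → lab (p i) (p (i + 1)) ≤ τ)
    (hk : (k : ℕ∞) = tdistR adj lab τ s v)
    (j : ℕ) (hj1 : 1 ≤ j) (hjk : j ≤ k) (hjs : p j ≠ s) :
    (j : ℕ∞) = tdistR adj lab (lab (p (j - 1)) (p j)) s (p j) := by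
  obtain ⟨h0, hkv, ha, hmo⟩ := hw
  have ej : j - 1 + 1 = j := by omega
  have hpre : IsTempWalk adj lab s (p j) j p :=
    ⟨h0, rfl, fun i hi => ha i (by omega), fun i hi => hmo i (by omega)⟩
  have hpres' : ∀ i, i < j → lab (p i) (p (i + 1)) ≤ lab (p (j - 1)) (p j) := by
    intro i hi
    have h := lab_chain hmo (j - 1) (by omega) i (by omega)
    rwa [ej] at h
  have hle : tdistR adj lab (lab (p (j - 1)) (p j)) s (p j) ≤ (j : ℕ∞) :=
    tdistR_le hpre hpres'
  have hτ' : lab (p (j - 1)) (p j) ≤ τ := by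
    have h := hres (j - 1) (by omega)
    rwa [ej] at h
  have hge : (j : ℕ∞) ≤ tdistR adj lab (lab (p (j - 1)) (p j)) s (p j) := by
    by_contra hc
    have hlt := lt_of_not_ge hc
    obtain ⟨m, hm⟩ := WithTop.ne_top_iff_exists.mp (ne_top_of_lt hlt)
    have hmlt : m < j := by
      rw [← hm] at hlt
      exact Nat.cast_lt.mp hlt
    obtain ⟨q, hq, hqr⟩ := tdistR_witness hm.symm
    have hm1 : 1 ≤ m := by
      rcases Nat.eq_zero_or_pos m with hz | h
      · subst hz
        exact absurd (hq.1 ▸ hq.2.1.symm) hjs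
      · exact h
    have hcross : 1 ≤ m → j < k → lab (q (m - 1)) (q m) ≤ lab (p j) (p (j + 1)) := by
      intro _ hjlt
      have h1 := hqr (m - 1) (by omega)
      have em : m - 1 + 1 = m := by omega
      rw [em] at h1
      have h2 := hmo (j - 1) (by omega)
      have ej2 : j - 1 + 2 = j + 1 := by omega
      rw [ej, ej2] at h2
      exact h1.trans h2
    obtain ⟨r, hr, hrr⟩ := splice hjk hkv (fun i _ hi => ha i hi)
      (fun i _ hi => hmo i hi) (fun i _ hi => hres i hi) hq
      (fun i hi => (hqr i hi).trans hτ') hcross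
    have hcontra : tdistR adj lab τ s v ≤ ((m + (k - j) : ℕ) : ℕ∞) := tdistR_le hr hrr
    rw [← hk] at hcontra
    have : k ≤ m + (k - j) := by exact_mod_cast hcontra
    omega
  exact le_antisymm hge hle
end suboptS

/-- Suboptimality of shortest restricted temporal paths, and the
`O(L·n)`-size single-source temporal preserver.  (a) If `p` is a shortest
`τ`-restricted temporal path from `s` to `v` and `u = p j ≠ s` is a vertex of it,
with `τ'` the label of the edge entering `u`, then the prefix `p[s,u]` is a
shortest `τ'`-restricted temporal path from `s` to `u`.  (b) `G` admits a subgraph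
`H` with at most `L·n` edges preserving all `τ`-restricted distances from `s`. -/
theorem stmt_19 (n L : ℕ) (G : SimpleGraph (Fin n))
    (lab : Fin n → Fin n → ℕ) (hsym : ∀ u v, lab u v = lab v u)
    (hlife : ∀ u v : Fin n, G.Adj u v → lab u v ∈ Finset.Icc 1 L)
    (s : Fin n) :
    (∀ (v : Fin n) (τ k : ℕ) (p : ℕ → Fin n),
      IsTempWalk G.Adj lab s v k p →
      (∀ i, i < k → lab (p i) (p (i + 1)) ≤ τ) →
      (k : ℕ∞) = tdistR G.Adj lab τ s v →
      ∀ j, 1 ≤ j → j ≤ k → p j ≠ s →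
        (j : ℕ∞) = tdistR G.Adj lab (lab (p (j - 1)) (p j)) s (p j)) ∧
    ∃ H : SimpleGraph (Fin n), H ≤ G ∧ H.edgeSet.ncard ≤ L * n ∧
      ∀ (v : Fin n) (τ : ℕ), tdistR H.Adj lab τ s v = tdistR G.Adj lab τ s v := by
  classical
  refine ⟨fun v τ k p hw hres hk j hj1 hjk hjs => subopt hw hres hk j hj1 hjk hjs, ?_⟩
  set P : Fin n → ℕ → Prop := fun v τ' => ∃ k : ℕ, 1 ≤ k ∧
      (k : ℕ∞) = tdistR G.Adj lab τ' s v ∧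
      ∃ p : ℕ → Fin n, IsTempWalk G.Adj lab s v k p ∧
        ∀ i, i < k → lab (p i) (p (i + 1)) ≤ τ' with hPdef
  set g : Fin n × ℕ → Sym2 (Fin n) := fun a =>
    if h : P a.1 a.2 then s(h.choose_spec.2.2.choose (h.choose - 1), a.1)
    else s(a.1, a.1) with hgdef
  set E : Finset (Sym2 (Fin n)) := (Finset.univ ×ˢ Finset.Icc 1 L).image g with hEdef
  set H : SimpleGraph (Fin n) := SimpleGraph.fromEdgeSet (E : Set (Sym2 (Fin n))) with hHdef
  have hHG : ∀ a b, H.Adj a b → G.Adj a b := by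
    intro a b hab
    rw [hHdef, SimpleGraph.fromEdgeSet_adj] at hab
    obtain ⟨hmem, hne⟩ := hab
    rw [Finset.mem_coe, hEdef, Finset.mem_image] at hmem
    obtain ⟨⟨v, τ'⟩, hx, hgx⟩ := hmem
    simp only [hgdef] at hgx
    split_ifs at hgx with h
    · have h1 : h.choose - 1 + 1 = h.choose := by
        have := h.choose_spec.1
        omega
      have hadj := h.choose_spec.2.2.choose_spec.1.2.2.1 (h.choose - 1)
        (by have := h.choose_spec.1; omega)
      rw [h1, h.choose_spec.2.2.choose_spec.1.2.1] at hadj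
      rw [Sym2.eq_iff] at hgx
      rcases hgx with ⟨rfl, rfl⟩ | ⟨rfl, rfl⟩
      · exact hadj
      · exact hadj.symm
    · rw [Sym2.eq_iff] at hgx
      rcases hgx with ⟨rfl, rfl⟩ | ⟨rfl, rfl⟩ <;> exact absurd rfl hne
  have hcard : H.edgeSet.ncard ≤ L * n := by
    have h1 : H.edgeSet ⊆ (E : Set (Sym2 (Fin n))) := by
      rw [hHdef, SimpleGraph.edgeSet_fromEdgeSet]
      exact Set.diff_subset
    have h2 : H.edgeSet.ncard ≤ (E : Set (Sym2 (Fin n))).ncard :=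
      Set.ncard_le_ncard h1 (Set.toFinite _)
    rw [Set.ncard_coe_finset] at h2
    refine h2.trans ?_
    refine (Finset.card_image_le).trans ?_
    rw [Finset.card_product, Finset.card_univ, Fintype.card_fin, Nat.card_Icc,
      Nat.add_sub_cancel]
    exact le_of_eq (Nat.mul_comm n L)
  have claim : ∀ k : ℕ, ∀ v : Fin n, ∀ τ : ℕ,
      (k : ℕ∞) = tdistR G.Adj lab τ s v → tdistR H.Adj lab τ s v ≤ (k : ℕ∞) := by
    intro k
    induction k using Nat.strong_induction_on with
    | _ k IH =>
    intro v τ hk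
    obtain ⟨p, hw, hres⟩ := tdistR_witness hk.symm
    by_cases hk0 : k = 0
    · subst hk0
      have hv : s = v := hw.1.symm.trans hw.2.1
      have hwalk : IsTempWalk H.Adj lab s v 0 (fun _ => s) :=
        ⟨rfl, hv, fun i hi => absurd hi (by omega), fun i hi => absurd hi (by omega)⟩
      exact tdistR_le hwalk (fun i hi => absurd hi (by omega))
    · have hk1 : 1 ≤ k := by omega
      have ek : k - 1 + 1 = k := by omega
      have hGadj : G.Adj (p (k - 1)) (p k) := by
        have h := hw.2.2.1 (k - 1) (by omega)
        rwa [ek] at h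
      have hτ'L : lab (p (k - 1)) (p k) ∈ Finset.Icc 1 L := hlife _ _ hGadj
      have hτ'τ : lab (p (k - 1)) (p k) ≤ τ := by
        have h := hres (k - 1) (by omega)
        rwa [ek] at h
      have hresτ' : ∀ i, i < k → lab (p i) (p (i + 1)) ≤ lab (p (k - 1)) (p k) := by
        intro i hi
        have h := lab_chain hw.2.2.2 (k - 1) (by omega) i (by omega)
        rwa [ek] at h
      have hd' : (k : ℕ∞) = tdistR G.Adj lab (lab (p (k - 1)) (p k)) s v :=
        le_antisymm (hk.le.trans (tdistR_anti hτ'τ s v)) (tdistR_le hw hresτ')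
      have hPv : P v (lab (p (k - 1)) (p k)) := ⟨k, hk1, hd', p, hw, hresτ'⟩
      have hKk : hPv.choose = k := by
        have h1 := hPv.choose_spec.2.1
        exact Nat.cast_inj.mp (h1.trans hd'.symm)
      obtain ⟨hqw, hqres⟩ := hPv.choose_spec.2.2.choose_spec
      set q := hPv.choose_spec.2.2.choose with hqdef
      rw [hKk] at hqw hqres
      have hgval : g (v, lab (p (k - 1)) (p k)) = s(q (k - 1), v) := by
        simp only [hgdef]
        rw [dif_pos hPv, ← hqdef, hKk]
      have hmemE : s(q (k - 1), v) ∈ E := by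
        rw [← hgval, hEdef]
        exact Finset.mem_image_of_mem g
          (Finset.mem_product.mpr ⟨Finset.mem_univ v, hτ'L⟩)
      have hGq : G.Adj (q (k - 1)) v := by
        have h := hqw.2.2.1 (k - 1) (by omega)
        rwa [ek, hqw.2.1] at h
      have hHadj : H.Adj (q (k - 1)) v := by
        rw [hHdef, SimpleGraph.fromEdgeSet_adj]
        exact ⟨Finset.mem_coe.mpr hmemE, hGq.ne⟩
      have hlabq : lab (q (k - 1)) v ≤ lab (p (k - 1)) (p k) := by
        have h := hqres (k - 1) (by omega)
        rwa [ek, hqw.2.1] at h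
      have hlabk : lab (q (k - 1)) (q k) ≤ τ := by
        rw [hqw.2.1]; exact hlabq.trans hτ'τ
      have hpadj : ∀ i, k - 1 ≤ i → i < k → H.Adj (q i) (q (i + 1)) := by
        intro i h1 h2
        have hi : i = k - 1 := by omega
        subst hi
        rw [ek, hqw.2.1]
        exact hHadj
      have hpmono : ∀ i, k - 1 ≤ i → i + 1 < k →
          lab (q i) (q (i + 1)) ≤ lab (q (i + 1)) (q (i + 2)) :=
        fun i h1 h2 => absurd h2 (by omega)
      have hpres2 : ∀ i, k - 1 ≤ i → i < k → lab (q i) (q (i + 1)) ≤ τ := by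
        intro i h1 h2
        have hi : i = k - 1 := by omega
        subst hi
        rw [ek]
        exact hlabk
      by_cases hqs : q (k - 1) = s
      · have hq0 : IsTempWalk H.Adj lab s (q (k - 1)) 0 (fun _ => s) :=
          ⟨rfl, hqs.symm, fun i hi => absurd hi (by omega),
            fun i hi => absurd hi (by omega)⟩
        obtain ⟨r, hrw, hrres⟩ := splice (by omega : k - 1 ≤ k) hqw.2.1
          hpadj hpmono hpres2 hq0 (fun i hi => absurd hi (by omega))
          (fun h _ => absurd h (by omega))
        have h := tdistR_le hrw hrres
        exact h.trans (Nat.cast_le.mpr (by omega))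
      · have hk2 : 2 ≤ k := by
          rcases Nat.lt_or_ge k 2 with h | h
          · have hkk : k = 1 := by omega
            subst hkk
            exact absurd hqw.1 (by simpa using hqs)
          · exact h
        have hsub := subopt hqw hqres hd' (k - 1) (by omega) (by omega) hqs
        have hIH := IH (k - 1) (by omega) (q (k - 1)) _ hsub
        have hne : tdistR H.Adj lab (lab (q (k - 1 - 1)) (q (k - 1))) s (q (k - 1)) ≠ ⊤ := by
          intro hT
          rw [hT] at hIH
          exact absurd (top_le_iff.mp hIH) (by simp)
        obtain ⟨m', hm'⟩ := WithTop.ne_top_iff_exists.mp hne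
        have hm'le : m' ≤ k - 1 := by
          rw [← hm'] at hIH
          exact Nat.cast_le.mp hIH
        obtain ⟨r0, hr0w, hr0res⟩ := tdistR_witness hm'.symm
        have hmono2 : lab (q (k - 1 - 1)) (q (k - 1)) ≤ lab (q (k - 1)) (q k) := by
          have h := hqw.2.2.2 (k - 2) (by omega)
          have e1 : k - 2 + 1 = k - 1 := by omega
          have e2 : k - 2 + 2 = k := by omega
          have e3 : k - 1 - 1 = k - 2 := by omega
          rw [e1, e2] at h
          rw [e3]
          exact h
        obtain ⟨r, hrw, hrres⟩ := splice (by omega : k - 1 ≤ k) hqw.2.1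
          hpadj hpmono hpres2 hr0w
          (fun i hi => (hr0res i hi).trans (hmono2.trans hlabk))
          (fun hm1 hjlt => by
            have h1 := hr0res (m' - 1) (by omega)
            have em : m' - 1 + 1 = m' := by omega
            rw [em] at h1
            rw [ek]
            exact h1.trans hmono2)
        have h := tdistR_le hrw hrres
        exact h.trans (Nat.cast_le.mpr (by omega))

  refine ⟨H, fun a b hab => hHG a b hab, hcard, ?_⟩
  intro v τ
  refine le_antisymm ?_ (tdistR_mono_adj hHG τ s v)
  by_cases h : tdistR G.Adj lab τ s v = ⊤
  · rw [h]; exact le_top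
  · obtain ⟨k, hk⟩ := WithTop.ne_top_iff_exists.mp h
    rw [← hk]
    exact claim k v τ hk
end
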